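/- arXiv:1704.08444 — 7 statements merged into one kernel-verified Lean document; each statement's English description precedes it below -/
import Mathlib

section
/- Let Q_X : ℝ → ℝ and φ : ℝ → ℝ each be continuous on [0,1), with Q_X(0) = 0 and φ(0) = 0, differentiable on (0,1) with Q_X'(z) > 0 and φ'(z) > 0 for all z ∈ (0,1), and with Q_X' and φ' interval-integrable on (0,u) for each u ∈ (0,1). Define h₁(z) = 1/((1−z)·Q_X'(z)) and h₂(z) = 1/((1−z)·φ'(z)) for z ∈ (0,1). Then for all u, P ∈ (0,1): Q_X(u) = ∫_0^u 1/((1−z)·h₁(z)) dz and φ(P) = ∫_0^P 1/((1−z)·h₂(z)) dz. That is, the quantile-curve based bivariate hazard rate (h₁, h₂) determines the quantile curve (Q_X(u), φ(P)) uniquely. -/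
open MeasureTheory Set

lemma aux_quantile_integral
    (QX Q' h₁ : ℝ → ℝ)
    (hQXc : ContinuousOn QX (Ico 0 1))
    (hQX0 : QX 0 = 0)
    (hQXd : ∀ z ∈ Ioo (0:ℝ) 1, HasDerivAt QX (Q' z) z)
    (hQ'pos : ∀ z ∈ Ioo (0:ℝ) 1, 0 < Q' z)
    (hQ'int : ∀ u ∈ Ioo (0:ℝ) 1, IntervalIntegrable Q' volume 0 u)
    (hh₁ : ∀ z ∈ Ioo (0:ℝ) 1, h₁ z = 1 / ((1 - z) * Q' z))
    {u : ℝ} (hu : u ∈ Ioo (0:ℝ) 1) :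
    QX u = ∫ z in (0:ℝ)..u, 1 / ((1 - z) * h₁ z) := by
  obtain ⟨hu0, hu1⟩ := hu
  have hsub : Icc (0:ℝ) u ⊆ Ico 0 1 := fun x hx => ⟨hx.1, lt_of_le_of_lt hx.2 hu1⟩
  have hftc : ∫ z in (0:ℝ)..u, Q' z = QX u - QX 0 := by
    apply intervalIntegral.integral_eq_sub_of_hasDeriv_right_of_le hu0.le
      (hQXc.mono hsub)
      (fun x hx => ((hQXd x ⟨hx.1, hx.2.trans hu1⟩).hasDerivWithinAt))
      (hQ'int u ⟨hu0, hu1⟩)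
  have hcongr : ∫ z in (0:ℝ)..u, 1 / ((1 - z) * h₁ z) = ∫ z in (0:ℝ)..u, Q' z := by
    apply intervalIntegral.integral_congr_ae
    apply Filter.Eventually.of_forall
    intro z hz
    rw [uIoc_of_le hu0.le] at hz
    have hzm : z ∈ Ioo (0:ℝ) 1 := ⟨hz.1, lt_of_le_of_lt hz.2 hu1⟩
    have h1z : (0:ℝ) < 1 - z := by linarith [hzm.2]
    have hQ := hQ'pos z hzm
    rw [hh₁ z hzm]
    field_simp
  rw [hcongr, hftc, hQX0, sub_zero]

/-- The quantile-curve based bivariate hazard rate `(h₁, h₂)` in the direction `ε₋₋`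
determines the quantile curve `(Q_X(u), φ(P))` uniquely:
`Q_X(u) = ∫_0^u 1/((1-z)·h₁(z)) dz` and `φ(P) = ∫_0^P 1/((1-z)·h₂(z)) dz`. -/
theorem bivariate_hazard_determines_quantile_curve
    (QX φ Q' φ' h₁ h₂ : ℝ → ℝ)
    (hQXc : ContinuousOn QX (Ico 0 1))
    (hφc : ContinuousOn φ (Ico 0 1))
    (hQX0 : QX 0 = 0)
    (hφ0 : φ 0 = 0)
    (hQXd : ∀ z ∈ Ioo (0:ℝ) 1, HasDerivAt QX (Q' z) z)
    (hφd : ∀ z ∈ Ioo (0:ℝ) 1, HasDerivAt φ (φ' z) z)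
    (hQ'pos : ∀ z ∈ Ioo (0:ℝ) 1, 0 < Q' z)
    (hφ'pos : ∀ z ∈ Ioo (0:ℝ) 1, 0 < φ' z)
    (hQ'int : ∀ u ∈ Ioo (0:ℝ) 1, IntervalIntegrable Q' volume 0 u)
    (hφ'int : ∀ u ∈ Ioo (0:ℝ) 1, IntervalIntegrable φ' volume 0 u)
    (hh₁ : ∀ z ∈ Ioo (0:ℝ) 1, h₁ z = 1 / ((1 - z) * Q' z))
    (hh₂ : ∀ z ∈ Ioo (0:ℝ) 1, h₂ z = 1 / ((1 - z) * φ' z)) :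
    ∀ u ∈ Ioo (0:ℝ) 1, ∀ P ∈ Ioo (0:ℝ) 1,
      QX u = (∫ z in (0:ℝ)..u, 1 / ((1 - z) * h₁ z)) ∧
      φ P = ∫ z in (0:ℝ)..P, 1 / ((1 - z) * h₂ z) := by
  intro u hu P hP
  exact ⟨aux_quantile_integral QX Q' h₁ hQXc hQX0 hQXd hQ'pos hQ'int hh₁ hu,
         aux_quantile_integral φ φ' h₂ hφc hφ0 hφd hφ'pos hφ'int hh₂ hP⟩
end

section
/- Let Q : ℝ → ℝ be continuous on [0,1), differentiable on (0,1) with Q'(z) > 0 for all z ∈ (0,1), and integrable on (0,1) with mean μ = ∫_0^1 Q(z) dz. Define the mean residual quantile function m(u) = (1/(1−u))·∫_u^1 Q(z) dz − Q(u) for u ∈ (0,1). Then for every u ∈ (0,1), Q(u) = μ − m(u) + ∫_0^u m(z)/(1−z) dz; that is, the mean residual quantile function determines the quantile function uniquely. -/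
open MeasureTheory Set

set_option maxHeartbeats 1000000 in
/-- The mean residual quantile function `m(u) = (1/(1-u))·∫_u^1 Q(z) dz − Q(u)`
determines the quantile function uniquely:
`Q(u) = μ − m(u) + ∫_0^u m(z)/(1-z) dz` for all `u ∈ (0,1)`. -/
theorem mrl_quantile_determines_quantile
    (Q Q' m : ℝ → ℝ) (μ : ℝ)
    (hQc : ContinuousOn Q (Ico 0 1))
    (hQd : ∀ z ∈ Ioo (0:ℝ) 1, HasDerivAt Q (Q' z) z)
    (hQ'pos : ∀ z ∈ Ioo (0:ℝ) 1, 0 < Q' z)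
    (hQint : IntervalIntegrable Q volume 0 1)
    (hμ : μ = ∫ z in (0:ℝ)..1, Q z)
    (hm : ∀ u ∈ Ioo (0:ℝ) 1, m u = (1 / (1 - u)) * (∫ z in u..(1:ℝ), Q z) - Q u) :
    ∀ u ∈ Ioo (0:ℝ) 1, Q u = μ - m u + ∫ z in (0:ℝ)..u, m z / (1 - z) := by
  intro u hu
  obtain ⟨hu0, hu1⟩ := hu
  set F : ℝ → ℝ := fun z => ∫ t in (0:ℝ)..z, Q t with hFdef
  have hsub : ∀ a b : ℝ, a ∈ Icc (0:ℝ) 1 → b ∈ Icc (0:ℝ) 1 →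
      IntervalIntegrable Q volume a b := by
    intro a b ha hb
    apply hQint.mono_set
    apply Set.uIcc_subset_uIcc <;> rw [Set.uIcc_of_le (by norm_num : (0:ℝ) ≤ 1)]
    · exact ha
    · exact hb
  have hsplit : ∀ z ∈ Icc (0:ℝ) 1, (∫ t in z..(1:ℝ), Q t) = μ - F z := by
    intro z hz
    have h1 := intervalIntegral.integral_add_adjacent_intervals
      (hsub 0 z (by norm_num) hz) (hsub z 1 hz (by norm_num))
    rw [hμ]; linarith
  set G : ℝ → ℝ := fun z => (1 - z)⁻¹ * (μ - F z) with hGdef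
  set g : ℝ → ℝ := fun z => (μ - F z) / (1 - z) ^ 2 - Q z / (1 - z) with hgdef
  have hQcu : ContinuousOn Q (Icc 0 u) :=
    hQc.mono (fun x hx => ⟨hx.1, lt_of_le_of_lt hx.2 hu1⟩)
  have hFcont : ContinuousOn F (Icc 0 u) := by
    have h : IntegrableOn Q (uIcc 0 u) volume := by
      rw [uIcc_of_le hu0.le]; exact hQcu.integrableOn_Icc
    have h2 := intervalIntegral.continuousOn_primitive_interval h
    rwa [uIcc_of_le hu0.le] at h2
  have hne : ∀ z ∈ Icc (0:ℝ) u, (1 : ℝ) - z ≠ 0 := by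
    intro z hz
    have : z < 1 := lt_of_le_of_lt hz.2 hu1
    linarith
  have hGcont : ContinuousOn G (Icc 0 u) :=
    ((continuousOn_const.sub continuousOn_id).inv₀ hne).mul
      (continuousOn_const.sub hFcont)
  have hderiv : ∀ z ∈ Ioo (0:ℝ) u, HasDerivAt G (g z) z := by
    intro z hz
    have hz1 : z ∈ Ioo (0:ℝ) 1 := ⟨hz.1, lt_trans hz.2 hu1⟩
    have hzne : (1 : ℝ) - z ≠ 0 := by linarith [hz1.2]
    have hF' : HasDerivAt F (Q z) z := by
      apply intervalIntegral.integral_hasDerivAt_right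
        (hsub 0 z (by norm_num) ⟨le_of_lt hz1.1, le_of_lt hz1.2⟩)
      · exact (hQc.mono Ioo_subset_Ico_self).stronglyMeasurableAtFilter
          isOpen_Ioo z hz1
      · exact (hQd z hz1).continuousAt
    have h1 : HasDerivAt (fun z : ℝ => (1 - z)⁻¹) (-(-1) / (1 - z) ^ 2) z :=
      ((hasDerivAt_id z).const_sub 1).inv hzne
    have h2 : HasDerivAt (fun z => μ - F z) (-(Q z)) z := hF'.const_sub μ
    have h3 : HasDerivAt G (-(-1) / (1 - z) ^ 2 * (μ - F z) + (1 - z)⁻¹ * -(Q z)) z := h1.mul h2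
    convert h3 using 1
    show (μ - F z) / (1 - z) ^ 2 - Q z / (1 - z) = _
    ring
  have hgcont : ContinuousOn g (Icc 0 u) := by
    apply ContinuousOn.sub
    · exact (continuousOn_const.sub hFcont).div
        ((continuousOn_const.sub continuousOn_id).pow 2)
        (fun z hz => pow_ne_zero 2 (hne z hz))
    · exact hQcu.div (continuousOn_const.sub continuousOn_id) hne
  have hgint : IntervalIntegrable g volume 0 u := by
    apply ContinuousOn.intervalIntegrable
    rwa [Set.uIcc_of_le hu0.le]
  have hftc : (∫ z in (0:ℝ)..u, g z) = G u - G 0 :=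
    intervalIntegral.integral_eq_sub_of_hasDeriv_right_of_le hu0.le hGcont
      (fun z hz => (hderiv z hz).hasDerivWithinAt) hgint
  have hcongr : (∫ z in (0:ℝ)..u, m z / (1 - z)) = ∫ z in (0:ℝ)..u, g z := by
    apply intervalIntegral.integral_congr_ae
    apply Filter.Eventually.of_forall
    intro z hz
    rw [Set.uIoc_of_le hu0.le] at hz
    have hz1 : z ∈ Ioo (0:ℝ) 1 := ⟨hz.1, lt_of_le_of_lt hz.2 hu1⟩
    have hzne : (1 : ℝ) - z ≠ 0 := by linarith [hz1.2]
    rw [hm z hz1, hsplit z ⟨le_of_lt hz1.1, le_of_lt hz1.2⟩, hgdef]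
    field_simp
  have hG0 : G 0 = μ := by
    simp [hGdef, hFdef]
  have hGu : m u = G u - Q u := by
    rw [hm u ⟨hu0, hu1⟩, hsplit u ⟨hu0.le, hu1.le⟩, hGdef]
    have : (1 : ℝ) / (1 - u) = (1 - u)⁻¹ := one_div _
    rw [this]
  rw [hcongr, hftc, hG0, hGu]
  ring
end

section
/- Let Q_X : ℝ → ℝ and φ : ℝ → ℝ each be continuous on [0,1), differentiable on (0,1) with Q_X'(z) > 0 and φ'(z) > 0 for all z ∈ (0,1), and integrable on (0,1) with means μ_X = ∫_0^1 Q_X(z) dz and μ_{Y_X} = ∫_0^1 φ(z) dz. Define m₁(u) = (1/(1−u))·∫_u^1 Q_X(z) dz − Q_X(u) and m₂(P) = (1/(1−P))·∫_P^1 φ(z) dz − φ(P) for u, P ∈ (0,1). Then for all u, P ∈ (0,1): Q_X(u) = μ_X − m₁(u) + ∫_0^u m₁(z)/(1−z) dz and φ(P) = μ_{Y_X} − m₂(P) + ∫_0^P m₂(z)/(1−z) dz. That is, the quantile-curve based bivariate mean residual life function (m₁, m₂) determines the quantile curve (Q_X(u), φ(P)) uniquely. -/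
open MeasureTheory Set intervalIntegral Topology

lemma mrl_key (f m : ℝ → ℝ) (μ : ℝ)
    (hc : ContinuousOn f (Ico 0 1))
    (hint : IntervalIntegrable f volume 0 1)
    (hμ : μ = ∫ z in (0:ℝ)..1, f z)
    (hm : ∀ u ∈ Ioo (0:ℝ) 1, m u = (1 / (1 - u)) * (∫ z in u..(1:ℝ), f z) - f u) :
    ∀ u ∈ Ioo (0:ℝ) 1, f u = μ - m u + ∫ z in (0:ℝ)..u, m z / (1 - z) := by
  intro u hu
  obtain ⟨hu0, hu1⟩ := hu
  -- basic integrability on subintervals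
  have hsub : ∀ z ∈ Icc (0:ℝ) 1, IntervalIntegrable f volume z 1 := by
    intro z hz
    refine hint.mono_set ?_
    rw [uIcc_of_le hz.2, uIcc_of_le (by norm_num : (0:ℝ) ≤ 1)]
    exact Icc_subset_Icc hz.1 le_rfl
  have hsub0 : ∀ z ∈ Icc (0:ℝ) 1, IntervalIntegrable f volume 0 z := by
    intro z hz
    refine hint.mono_set ?_
    rw [uIcc_of_le hz.1, uIcc_of_le (by norm_num : (0:ℝ) ≤ 1)]
    exact Icc_subset_Icc le_rfl hz.2
  set H : ℝ → ℝ := fun z => ∫ t in z..(1:ℝ), f t with hH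
  set F : ℝ → ℝ := fun z => (1 - z)⁻¹ * H z with hF
  -- H is continuous on Icc 0 u
  have hHcont : ContinuousOn H (Icc 0 1) := by
    have hprim : ContinuousOn (fun z => ∫ t in (0:ℝ)..z, f t) (Icc 0 1) := by
      have := intervalIntegral.continuousOn_primitive_interval
        (a := (0:ℝ)) (b := (1:ℝ)) (f := f) (μ := volume) ?_
      · simpa [uIcc_of_le (by norm_num : (0:ℝ) ≤ 1)] using this
      · rw [uIcc_of_le (by norm_num : (0:ℝ) ≤ 1)]
        exact (intervalIntegrable_iff_integrableOn_Icc_of_le (by norm_num)).mp hint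
    have heq : ∀ z ∈ Icc (0:ℝ) 1, H z = (∫ t in (0:ℝ)..1, f t) - ∫ t in (0:ℝ)..z, f t := by
      intro z hz
      have := intervalIntegral.integral_add_adjacent_intervals (hsub0 z hz) (hsub z hz)
      simp only [hH]; linarith
    exact ContinuousOn.congr (continuousOn_const.sub hprim) heq
  have h1u : ∀ z ∈ Icc (0:ℝ) u, (1:ℝ) - z ≠ 0 := fun z hz => by
    have : z < 1 := lt_of_le_of_lt hz.2 hu1; linarith
  have hIccu : Icc (0:ℝ) u ⊆ Icc 0 1 := Icc_subset_Icc le_rfl hu1.le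
  -- F is continuous on Icc 0 u
  have hFcont : ContinuousOn F (Icc 0 u) := by
    apply ContinuousOn.mul
    · exact ((continuousOn_const.sub continuousOn_id).inv₀ h1u)
    · exact hHcont.mono hIccu
  -- derivative of F on Ioo 0 u
  have hFderiv : ∀ z ∈ Ioo (0:ℝ) u, HasDerivAt F ((1 - z)⁻¹ ^ 2 * H z - (1 - z)⁻¹ * f z) z := by
    intro z hz
    have hz01 : z ∈ Ioo (0:ℝ) 1 := ⟨hz.1, lt_trans hz.2 hu1⟩
    have hzne : (1:ℝ) - z ≠ 0 := by have := hz01.2; intro h; linarith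
    have hca : ContinuousAt f z :=
      hc.continuousAt (Ico_mem_nhds hz01.1 hz01.2)
    have hmeas : StronglyMeasurableAtFilter f (𝓝 z) volume :=
      ContinuousOn.stronglyMeasurableAtFilter isOpen_Ioo (hc.mono Ioo_subset_Ico_self)
        z hz01
    have hHd : HasDerivAt H (-f z) z :=
      intervalIntegral.integral_hasDerivAt_left (hsub z ⟨hz01.1.le, hz01.2.le⟩) hmeas hca
    have hinv : HasDerivAt (fun z : ℝ => (1 - z)⁻¹) ((1 - z)⁻¹ ^ 2) z := by
      have h1 : HasDerivAt (fun z : ℝ => 1 - z) (-1) z := by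
        simpa using (hasDerivAt_id z).const_sub 1
      have := h1.inv hzne
      rw [show (- -1 / (1 - z) ^ 2 : ℝ) = (1 - z)⁻¹ ^ 2 by rw [neg_neg, inv_pow, one_div]] at this
      exact this
    have := hinv.mul hHd
    rw [show (1 - z)⁻¹ ^ 2 * H z - (1 - z)⁻¹ * f z = (1 - z)⁻¹ ^ 2 * H z + (1 - z)⁻¹ * -f z by ring]
    exact this
  -- the integrand equals the derivative of F a.e.
  have hcongr : ∫ z in (0:ℝ)..u, m z / (1 - z)
      = ∫ z in (0:ℝ)..u, ((1 - z)⁻¹ ^ 2 * H z - (1 - z)⁻¹ * f z) := by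
    apply intervalIntegral.integral_congr_ae
    filter_upwards with z hz
    rw [uIoc_of_le hu0.le] at hz
    have hz01 : z ∈ Ioo (0:ℝ) 1 := ⟨hz.1, lt_of_le_of_lt hz.2 hu1⟩
    have hzne : (1:ℝ) - z ≠ 0 := by have := hz01.2; intro h; linarith
    rw [hm z hz01]
    field_simp
    ring
  -- integrability of the derivative
  have hgint : IntervalIntegrable (fun z => (1 - z)⁻¹ ^ 2 * H z - (1 - z)⁻¹ * f z)
      volume 0 u := by
    apply ContinuousOn.intervalIntegrable
    rw [uIcc_of_le hu0.le]
    apply ContinuousOn.sub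
    · exact ((((continuousOn_const.sub continuousOn_id).inv₀ h1u)).pow 2).mul
        (hHcont.mono hIccu)
    · exact ((continuousOn_const.sub continuousOn_id).inv₀ h1u).mul
        (hc.mono (fun z hz => ⟨hz.1, lt_of_le_of_lt hz.2 hu1⟩))
  -- FTC
  have hftc : ∫ z in (0:ℝ)..u, ((1 - z)⁻¹ ^ 2 * H z - (1 - z)⁻¹ * f z) = F u - F 0 :=
    intervalIntegral.integral_eq_sub_of_hasDerivAt_of_le hu0.le hFcont hFderiv hgint
  have hF0 : F 0 = μ := by simp [hF, hH, hμ]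
  have hFu : F u = (1 - u)⁻¹ * H u := rfl
  have hune : (1:ℝ) - u ≠ 0 := by intro h; linarith
  rw [hcongr, hftc, hF0, hFu, hm u ⟨hu0, hu1⟩]
  have : H u = ∫ z in u..(1:ℝ), f z := rfl
  rw [← this]
  field_simp
  ring

/-- The quantile-curve based bivariate mean residual life function `(m₁, m₂)` in the
direction `ε₋₋` determines the quantile curve `(Q_X(u), φ(P))` uniquely:
`Q_X(u) = μ_X − m₁(u) + ∫_0^u m₁(z)/(1-z) dz` and
`φ(P) = μ_{Y_X} − m₂(P) + ∫_0^P m₂(z)/(1-z) dz`. -/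
theorem bivariate_mrl_determines_quantile_curve
    (QX φ Q' φ' m₁ m₂ : ℝ → ℝ) (μX μYX : ℝ)
    (hQXc : ContinuousOn QX (Ico 0 1))
    (hφc : ContinuousOn φ (Ico 0 1))
    (hQXd : ∀ z ∈ Ioo (0:ℝ) 1, HasDerivAt QX (Q' z) z)
    (hφd : ∀ z ∈ Ioo (0:ℝ) 1, HasDerivAt φ (φ' z) z)
    (hQ'pos : ∀ z ∈ Ioo (0:ℝ) 1, 0 < Q' z)
    (hφ'pos : ∀ z ∈ Ioo (0:ℝ) 1, 0 < φ' z)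
    (hQXint : IntervalIntegrable QX volume 0 1)
    (hφint : IntervalIntegrable φ volume 0 1)
    (hμX : μX = ∫ z in (0:ℝ)..1, QX z)
    (hμYX : μYX = ∫ z in (0:ℝ)..1, φ z)
    (hm₁ : ∀ u ∈ Ioo (0:ℝ) 1, m₁ u = (1 / (1 - u)) * (∫ z in u..(1:ℝ), QX z) - QX u)
    (hm₂ : ∀ P ∈ Ioo (0:ℝ) 1, m₂ P = (1 / (1 - P)) * (∫ z in P..(1:ℝ), φ z) - φ P) :
    ∀ u ∈ Ioo (0:ℝ) 1, ∀ P ∈ Ioo (0:ℝ) 1,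
      QX u = μX - m₁ u + (∫ z in (0:ℝ)..u, m₁ z / (1 - z)) ∧
      φ P = μYX - m₂ P + ∫ z in (0:ℝ)..P, m₂ z / (1 - z) := by
  intro u hu P hP
  exact ⟨mrl_key QX m₁ μX hQXc hQXint hμX hm₁ u hu,
    mrl_key φ m₂ μYX hφc hφint hμYX hm₂ P hP⟩
end

section
/- Let Q_X : ℝ → ℝ and φ : ℝ → ℝ each be continuously differentiable on (0,1) with Q_X'(z) > 0 and φ'(z) > 0 for all z ∈ (0,1), integrable on (0,1), and satisfy lim_{z→1⁻} (1−z)·Q_X(z) = 0 and lim_{z→1⁻} (1−z)·φ(z) = 0. Define h₁(z) = 1/((1−z)·Q_X'(z)), h₂(z) = 1/((1−z)·φ'(z)), m₁(u) = (1/(1−u))·∫_u^1 Q_X(z) dz − Q_X(u), and m₂(P) = (1/(1−P))·∫_P^1 φ(z) dz − φ(P). Then for all u, P ∈ (0,1): (1−u)·m₁(u) = ∫_u^1 1/h₁(z) dz and (1−P)·m₂(P) = ∫_P^1 1/h₂(z) dz. -/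
open MeasureTheory Set Filter Topology

lemma hazard_mrl_key (Q Q' : ℝ → ℝ)
    (hd : ∀ z ∈ Ioo (0:ℝ) 1, HasDerivAt Q (Q' z) z)
    (hc : ContinuousOn Q' (Ioo 0 1))
    (hpos : ∀ z ∈ Ioo (0:ℝ) 1, 0 ≤ Q' z)
    (hint : IntervalIntegrable Q volume 0 1)
    (hlim : Tendsto (fun z => (1 - z) * Q z) (nhdsWithin 1 (Iio 1)) (nhds 0))
    {u : ℝ} (hu : u ∈ Ioo (0:ℝ) 1) :
    (∫ z in u..(1:ℝ), (1 - z) * Q' z) = (∫ z in u..(1:ℝ), Q z) - (1 - u) * Q u := by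
  obtain ⟨hu0, hu1⟩ := hu
  set f : ℝ → ℝ := fun z => (1 - z) * Q' z with hfdef
  set g : ℝ → ℝ := fun z => (1 - z) * Q z with hgdef
  set b : ℕ → ℝ := fun n => 1 - (1 - u) / ((n : ℝ) + 2) with hbdef
  have h1u : (0:ℝ) < 1 - u := by linarith
  have hb_mem : ∀ n, b n ∈ Ioo u 1 := by
    intro n
    have h2 : (1:ℝ) < (n : ℝ) + 2 := by
      have : (0:ℝ) ≤ (n : ℝ) := Nat.cast_nonneg n
      linarith
    constructor
    · have h3 : (1 - u) / ((n : ℝ) + 2) < 1 - u := div_lt_self h1u h2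
      simp only [hbdef]; linarith
    · have h3 : 0 < (1 - u) / ((n : ℝ) + 2) := by positivity
      simp only [hbdef]; linarith
  have hb_tend : Tendsto b atTop (𝓝 1) := by
    have hnat : Tendsto (fun n : ℕ => (n : ℝ) + 2) atTop atTop :=
      tendsto_atTop_add_const_right _ 2 tendsto_natCast_atTop_atTop
    have h0 : Tendsto (fun n : ℕ => (1 - u) / ((n : ℝ) + 2)) atTop (𝓝 0) :=
      Tendsto.div_atTop tendsto_const_nhds hnat
    simpa using h0.const_sub 1
  -- derivative of g
  have hg' : ∀ z ∈ Ioo (0:ℝ) 1, HasDerivAt g (f z - Q z) z := by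
    intro z hz
    have h1 : HasDerivAt (fun w : ℝ => 1 - w) (-1) z := by
      simpa using (hasDerivAt_id z).const_sub 1
    have h2 : HasDerivAt (fun w => (1 - w) * Q w) (-1 * Q z + (1 - z) * Q' z) z := h1.mul (hd z hz)
    convert h2 using 1
    show (1 - z) * Q' z - Q z = _; ring
  have hfc : ContinuousOn f (Ioo 0 1) :=
    (continuous_const.sub continuous_id).continuousOn.mul hc
  have hsubIoo : ∀ n, Icc u (b n) ⊆ Ioo (0:ℝ) 1 := fun n x hx =>
    ⟨lt_of_lt_of_le hu0 hx.1, lt_of_le_of_lt hx.2 (hb_mem n).2⟩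
  have hfint : ∀ n, IntervalIntegrable f volume u (b n) := by
    intro n
    apply ContinuousOn.intervalIntegrable
    rw [uIcc_of_le (hb_mem n).1.le]
    exact hfc.mono (hsubIoo n)
  have hQint : ∀ n, IntervalIntegrable Q volume u (b n) := by
    intro n
    apply hint.mono_set
    rw [uIcc_of_le (hb_mem n).1.le, uIcc_of_le (zero_le_one' ℝ)]
    exact Icc_subset_Icc hu0.le (hb_mem n).2.le
  have key : ∀ n, (∫ z in u..(b n), f z) = g (b n) - g u + ∫ z in u..(b n), Q z := by
    intro n
    have hftc : (∫ z in u..(b n), (f z - Q z)) = g (b n) - g u := by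
      apply intervalIntegral.integral_eq_sub_of_hasDerivAt
      · intro z hz
        rw [uIcc_of_le (hb_mem n).1.le] at hz
        exact hg' z (hsubIoo n hz)
      · exact (hfint n).sub (hQint n)
    have h2 := intervalIntegral.integral_sub (hfint n) (hQint n)
    rw [hftc] at h2
    linarith
  -- limit of RHS
  have hgb : Tendsto (fun n => g (b n)) atTop (𝓝 0) := by
    apply hlim.comp
    exact tendsto_nhdsWithin_of_tendsto_nhds_of_eventually_within _ hb_tend
      (Eventually.of_forall fun n => (hb_mem n).2)
  have hQIoc : IntegrableOn Q (Ioc 0 1) volume :=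
    (intervalIntegrable_iff_integrableOn_Ioc_of_le (zero_le_one' ℝ)).mp hint
  have hQIcc : IntegrableOn Q (uIcc u 1) volume := by
    rw [uIcc_of_le hu1.le]
    exact hQIoc.mono_set (fun x hx => ⟨lt_of_lt_of_le hu0 hx.1, hx.2⟩)
  have hprim : Tendsto (fun n => ∫ z in u..(b n), Q z) atTop (𝓝 (∫ z in u..(1:ℝ), Q z)) := by
    have hcont := intervalIntegral.continuousOn_primitive_interval hQIcc
    have h1mem : (1:ℝ) ∈ uIcc u 1 := by
      rw [uIcc_of_le hu1.le]; exact right_mem_Icc.mpr hu1.le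
    have hcw : Tendsto (fun x => ∫ z in u..x, Q z) (𝓝[uIcc u 1] 1) (𝓝 (∫ z in u..(1:ℝ), Q z)) :=
      hcont 1 h1mem
    apply hcw.comp
    apply tendsto_nhdsWithin_of_tendsto_nhds_of_eventually_within _ hb_tend
    apply Eventually.of_forall
    intro n
    rw [uIcc_of_le hu1.le]
    exact ⟨(hb_mem n).1.le, (hb_mem n).2.le⟩
  have hA : Tendsto (fun n => ∫ z in u..(b n), f z) atTop
      (𝓝 ((∫ z in u..(1:ℝ), Q z) - g u)) := by
    have h1 := ((hgb.sub (tendsto_const_nhds (x := g u))).add hprim)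
    simp only [zero_sub] at h1
    have h2 : (∫ z in u..(1:ℝ), Q z) - g u = -g u + ∫ z in u..(1:ℝ), Q z := by ring
    rw [h2]
    exact h1.congr (fun n => (key n).symm)
  -- integrability of f on Ioc u 1
  have hres : ∀ n (G : ℝ → ℝ),
      (∫ x in Ioc u (b n), G x ∂(volume.restrict (Ioc u 1))) = ∫ x in Ioc u (b n), G x := by
    intro n G
    rw [Measure.restrict_restrict measurableSet_Ioc,
      inter_eq_self_of_subset_left (Ioc_subset_Ioc le_rfl (hb_mem n).2.le)]
  have hcover : AECover ((volume : Measure ℝ).restrict (Ioc u 1)) atTop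
      (fun n => Ioc u (b n)) :=
    MeasureTheory.aecover_Ioc_of_Ioc (tendsto_const_nhds) hb_tend
  have hfon : ∀ n, IntegrableOn f (Ioc u (b n)) ((volume : Measure ℝ).restrict (Ioc u 1)) := by
    intro n
    have h1 : IntegrableOn f (Ioc u (b n)) volume := (hfint n).1
    unfold IntegrableOn
    rw [Measure.restrict_restrict measurableSet_Ioc,
      inter_eq_self_of_subset_left (Ioc_subset_Ioc le_rfl (hb_mem n).2.le)]
    exact h1
  have hnorm : ∀ n, (∫ x in Ioc u (b n), ‖f x‖ ∂(volume.restrict (Ioc u 1)))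
      = ∫ z in u..(b n), f z := by
    intro n
    rw [hres n, intervalIntegral.integral_of_le (hb_mem n).1.le]
    apply setIntegral_congr_fun measurableSet_Ioc
    intro x hx
    have hx01 : x ∈ Ioo (0:ℝ) 1 := ⟨hu0.trans hx.1, lt_of_le_of_lt hx.2 (hb_mem n).2⟩
    have h1x : (0:ℝ) ≤ 1 - x := by linarith [hx01.2]
    exact Real.norm_of_nonneg (mul_nonneg h1x (hpos x hx01))
  have hintf : Integrable f ((volume : Measure ℝ).restrict (Ioc u 1)) := by
    apply hcover.integrable_of_integral_norm_tendsto _ hfon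
    exact (hA.congr (fun n => (hnorm n).symm))
  have hlast : Tendsto (fun n => ∫ x in Ioc u (b n), f x ∂(volume.restrict (Ioc u 1)))
      atTop (𝓝 (∫ x, f x ∂((volume : Measure ℝ).restrict (Ioc u 1)))) :=
    hcover.integral_tendsto_of_countably_generated hintf
  have heq : (∫ x, f x ∂((volume : Measure ℝ).restrict (Ioc u 1)))
      = (∫ z in u..(1:ℝ), Q z) - g u := by
    apply tendsto_nhds_unique _ hA
    apply hlast.congr
    intro n
    rw [hres n, intervalIntegral.integral_of_le (hb_mem n).1.le]
  rw [intervalIntegral.integral_of_le hu1.le]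
  exact heq


/-- Relationship between the quantile-curve based bivariate hazard rate `(h₁, h₂)` and
the bivariate mean residual life function `(m₁, m₂)` in the direction `ε₋₋`:
`(1-u)·m₁(u) = ∫_u^1 1/h₁(z) dz` and `(1-P)·m₂(P) = ∫_P^1 1/h₂(z) dz`. -/
theorem bivariate_hazard_mrl_relation
    (QX φ Q' φ' h₁ h₂ m₁ m₂ : ℝ → ℝ)
    (hQXd : ∀ z ∈ Ioo (0:ℝ) 1, HasDerivAt QX (Q' z) z)
    (hφd : ∀ z ∈ Ioo (0:ℝ) 1, HasDerivAt φ (φ' z) z)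
    (hQ'c : ContinuousOn Q' (Ioo 0 1))
    (hφ'c : ContinuousOn φ' (Ioo 0 1))
    (hQ'pos : ∀ z ∈ Ioo (0:ℝ) 1, 0 < Q' z)
    (hφ'pos : ∀ z ∈ Ioo (0:ℝ) 1, 0 < φ' z)
    (hQXint : IntervalIntegrable QX volume 0 1)
    (hφint : IntervalIntegrable φ volume 0 1)
    (hlimQ : Filter.Tendsto (fun z => (1 - z) * QX z) (nhdsWithin 1 (Iio 1)) (nhds 0))
    (hlimφ : Filter.Tendsto (fun z => (1 - z) * φ z) (nhdsWithin 1 (Iio 1)) (nhds 0))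
    (hh₁ : ∀ z ∈ Ioo (0:ℝ) 1, h₁ z = 1 / ((1 - z) * Q' z))
    (hh₂ : ∀ z ∈ Ioo (0:ℝ) 1, h₂ z = 1 / ((1 - z) * φ' z))
    (hm₁ : ∀ u ∈ Ioo (0:ℝ) 1, m₁ u = (1 / (1 - u)) * (∫ z in u..(1:ℝ), QX z) - QX u)
    (hm₂ : ∀ P ∈ Ioo (0:ℝ) 1, m₂ P = (1 / (1 - P)) * (∫ z in P..(1:ℝ), φ z) - φ P) :
    ∀ u ∈ Ioo (0:ℝ) 1, ∀ P ∈ Ioo (0:ℝ) 1,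
      (1 - u) * m₁ u = (∫ z in u..(1:ℝ), 1 / h₁ z) ∧
      (1 - P) * m₂ P = ∫ z in P..(1:ℝ), 1 / h₂ z := by
  have main : ∀ (Q Qd h m : ℝ → ℝ),
      (∀ z ∈ Ioo (0:ℝ) 1, HasDerivAt Q (Qd z) z) →
      ContinuousOn Qd (Ioo 0 1) →
      (∀ z ∈ Ioo (0:ℝ) 1, 0 < Qd z) →
      IntervalIntegrable Q volume 0 1 →
      Tendsto (fun z => (1 - z) * Q z) (nhdsWithin 1 (Iio 1)) (nhds 0) →
      (∀ z ∈ Ioo (0:ℝ) 1, h z = 1 / ((1 - z) * Qd z)) →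
      (∀ u ∈ Ioo (0:ℝ) 1, m u = (1 / (1 - u)) * (∫ z in u..(1:ℝ), Q z) - Q u) →
      ∀ u ∈ Ioo (0:ℝ) 1, (1 - u) * m u = ∫ z in u..(1:ℝ), 1 / h z := by
    intro Q Qd h m hd hc hpos hint hlim hh hm u hu
    obtain ⟨hu0, hu1⟩ := hu
    have hcongr : (∫ z in u..(1:ℝ), 1 / h z) = ∫ z in u..(1:ℝ), (1 - z) * Qd z := by
      apply intervalIntegral.integral_congr_ae
      have h1 : ∀ᵐ x : ℝ ∂volume, x ≠ 1 := by
        have h2 : (volume : Measure ℝ) {(1:ℝ)} = 0 := measure_singleton 1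
        rw [ae_iff]
        simp only [ne_eq, not_not]
        simp [h2]
      filter_upwards [h1] with x hx hxI
      rw [uIoc_of_le hu1.le] at hxI
      have hx01 : x ∈ Ioo (0:ℝ) 1 := ⟨hu0.trans hxI.1, lt_of_le_of_ne hxI.2 hx⟩
      rw [hh x hx01, one_div_one_div]
    rw [hcongr,
      hazard_mrl_key Q Qd hd hc (fun z hz => (hpos z hz).le) hint hlim ⟨hu0, hu1⟩,
      hm u ⟨hu0, hu1⟩]
    have hne : (1:ℝ) - u ≠ 0 := by linarith
    field_simp
  intro u hu P hP
  exact ⟨main QX Q' h₁ m₁ hQXd hQ'c hQ'pos hQXint hlimQ hh₁ hm₁ u hu,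
         main φ φ' h₂ m₂ hφd hφ'c hφ'pos hφint hlimφ hh₂ hm₂ P hP⟩
end

section
/- Let Q_X : ℝ → ℝ and φ : ℝ → ℝ each be continuous on [0,1), with Q_X(0) = 0 and φ(0) = 0, differentiable on (0,1) with Q_X'(z) > 0 and φ'(z) > 0 for all z ∈ (0,1), and with Q_X' and φ' interval-integrable on (0,u) for each u ∈ (0,1). Define r₁(z) = 1/(z·Q_X'(z)) and r₂(z) = 1/(z·φ'(z)) for z ∈ (0,1). Then for all u, P ∈ (0,1): Q_X(u) = ∫_0^u 1/(z·r₁(z)) dz and φ(P) = ∫_0^P 1/(z·r₂(z)) dz. That is, the quantile-curve based bivariate reversed hazard rate (r₁, r₂) determines the quantile curve (Q_X(u), φ(P)) uniquely. -/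
open MeasureTheory Set

lemma aux_determines (QX Q' r₁ : ℝ → ℝ)
    (hQXc : ContinuousOn QX (Ico 0 1))
    (hQX0 : QX 0 = 0)
    (hQXd : ∀ z ∈ Ioo (0:ℝ) 1, HasDerivAt QX (Q' z) z)
    (hQ'pos : ∀ z ∈ Ioo (0:ℝ) 1, 0 < Q' z)
    (hQ'int : ∀ u ∈ Ioo (0:ℝ) 1, IntervalIntegrable Q' volume 0 u)
    (hr₁ : ∀ z ∈ Ioo (0:ℝ) 1, r₁ z = 1 / (z * Q' z)) :
    ∀ u ∈ Ioo (0:ℝ) 1, QX u = ∫ z in (0:ℝ)..u, 1 / (z * r₁ z) := by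
  intro u hu
  obtain ⟨hu0, hu1⟩ := hu
  have hsub : Ioc (0:ℝ) u ⊆ Ioo 0 1 := fun z hz => ⟨hz.1, lt_of_le_of_lt hz.2 hu1⟩
  have hcong : ∫ z in (0:ℝ)..u, 1 / (z * r₁ z) = ∫ z in (0:ℝ)..u, Q' z := by
    apply intervalIntegral.integral_congr_ae
    filter_upwards with z hz
    rw [uIoc_of_le hu0.le] at hz
    have hz' := hsub hz
    have hzne : z ≠ 0 := ne_of_gt hz'.1
    have hQne : Q' z ≠ 0 := ne_of_gt (hQ'pos z hz')
    rw [hr₁ z hz']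
    field_simp
  rw [hcong]
  have := intervalIntegral.integral_eq_sub_of_hasDeriv_right_of_le hu0.le
    (f := QX) (f' := Q')
    (hQXc.mono (fun z hz => ⟨hz.1, lt_of_le_of_lt hz.2 hu1⟩))
    (fun z hz => ((hQXd z ⟨hz.1, hz.2.trans hu1⟩).hasDerivWithinAt))
    (hQ'int u ⟨hu0, hu1⟩)
  rw [this, hQX0, sub_zero]

/-- The quantile-curve based bivariate reversed hazard rate `(r₁, r₂)` in the direction
`ε₋₋` determines the quantile curve `(Q_X(u), φ(P))` uniquely:
`Q_X(u) = ∫_0^u 1/(z·r₁(z)) dz` and `φ(P) = ∫_0^P 1/(z·r₂(z)) dz`. -/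
theorem bivariate_reversed_hazard_determines_quantile_curve
    (QX φ Q' φ' r₁ r₂ : ℝ → ℝ)
    (hQXc : ContinuousOn QX (Ico 0 1))
    (hφc : ContinuousOn φ (Ico 0 1))
    (hQX0 : QX 0 = 0)
    (hφ0 : φ 0 = 0)
    (hQXd : ∀ z ∈ Ioo (0:ℝ) 1, HasDerivAt QX (Q' z) z)
    (hφd : ∀ z ∈ Ioo (0:ℝ) 1, HasDerivAt φ (φ' z) z)
    (hQ'pos : ∀ z ∈ Ioo (0:ℝ) 1, 0 < Q' z)
    (hφ'pos : ∀ z ∈ Ioo (0:ℝ) 1, 0 < φ' z)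
    (hQ'int : ∀ u ∈ Ioo (0:ℝ) 1, IntervalIntegrable Q' volume 0 u)
    (hφ'int : ∀ u ∈ Ioo (0:ℝ) 1, IntervalIntegrable φ' volume 0 u)
    (hr₁ : ∀ z ∈ Ioo (0:ℝ) 1, r₁ z = 1 / (z * Q' z))
    (hr₂ : ∀ z ∈ Ioo (0:ℝ) 1, r₂ z = 1 / (z * φ' z)) :
    ∀ u ∈ Ioo (0:ℝ) 1, ∀ P ∈ Ioo (0:ℝ) 1,
      QX u = (∫ z in (0:ℝ)..u, 1 / (z * r₁ z)) ∧
      φ P = ∫ z in (0:ℝ)..P, 1 / (z * r₂ z) := by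
  intro u hu P hP
  exact ⟨aux_determines QX Q' r₁ hQXc hQX0 hQXd hQ'pos hQ'int hr₁ u hu,
    aux_determines φ φ' r₂ hφc hφ0 hφd hφ'pos hφ'int hr₂ P hP⟩
end

section
/- Let Q : ℝ → ℝ be continuously differentiable on [0,1) with Q(0) = 0 and Q'(z) > 0 for all z ∈ (0,1). Define the reversed mean residual quantile function η(u) = Q(u) − (1/u)·∫_0^u Q(z) dz for u ∈ (0,1). Then for every u ∈ (0,1), Q(u) = η(u) + ∫_0^u η(z)/z dz; that is, the reversed mean residual quantile function determines the quantile function uniquely, without requiring knowledge of the mean. -/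
open MeasureTheory Set Filter Topology

/-- The reversed mean residual quantile function `η(u) = Q(u) − (1/u)·∫_0^u Q(z) dz`
determines the quantile function uniquely: `Q(u) = η(u) + ∫_0^u η(z)/z dz` for all
`u ∈ (0,1)`, without requiring knowledge of the mean. -/
theorem reversed_mrl_determines_quantile
    (Q Q' η : ℝ → ℝ)
    (hQd : ∀ z ∈ Ico (0:ℝ) 1, HasDerivWithinAt Q (Q' z) (Ico 0 1) z)
    (hQ'c : ContinuousOn Q' (Ico 0 1))
    (hQ0 : Q 0 = 0)
    (hQ'pos : ∀ z ∈ Ioo (0:ℝ) 1, 0 < Q' z)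
    (hη : ∀ u ∈ Ioo (0:ℝ) 1, η u = Q u - (1 / u) * ∫ z in (0:ℝ)..u, Q z) :
    ∀ u ∈ Ioo (0:ℝ) 1, Q u = η u + ∫ z in (0:ℝ)..u, η z / z := by
  intro u hu
  obtain ⟨hu0, hu1⟩ := hu
  set G : ℝ → ℝ := fun x => ∫ t in (0:ℝ)..x, Q t with hGdef
  have hQc : ContinuousOn Q (Ico 0 1) := fun z hz => (hQd z hz).continuousWithinAt
  have hIcc : Icc (0:ℝ) u ⊆ Ico 0 1 := Icc_subset_Ico_right hu1
  -- bound on Q'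
  obtain ⟨M, hM⟩ : ∃ M, ∀ z ∈ Icc (0:ℝ) u, ‖Q' z‖ ≤ M :=
    (isCompact_Icc).exists_bound_of_continuousOn (hQ'c.mono hIcc)
  have hM0 : 0 ≤ M := le_trans (norm_nonneg _) (hM 0 ⟨le_refl 0, hu0.le⟩)
  -- Q is M-Lipschitz from 0 on [0,u]
  have hQbound : ∀ z ∈ Icc (0:ℝ) u, |Q z| ≤ M * z := by
    intro z hz
    have := (convex_Icc (0:ℝ) u).norm_image_sub_le_of_norm_hasDerivWithin_le
      (f := Q) (f' := Q') (fun x hx => (hQd x (hIcc hx)).mono hIcc) hM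
      (⟨le_refl 0, hu0.le⟩ : (0:ℝ) ∈ Icc 0 u) hz
    simpa [hQ0, Real.norm_eq_abs, abs_of_nonneg hz.1] using this
  -- Q integrable on [0,u]
  have hQint : IntegrableOn Q (Icc 0 u) := (hQc.mono hIcc).integrableOn_Icc
  have hQii : ∀ z ∈ Icc (0:ℝ) u, IntervalIntegrable Q volume 0 z := by
    intro z hz
    rw [intervalIntegrable_iff_integrableOn_Icc_of_le hz.1]
    exact hQint.mono_set (Icc_subset_Icc (le_refl 0) hz.2)
  -- bound on G
  have hGbound : ∀ z ∈ Icc (0:ℝ) u, |G z| ≤ M * z ^ 2 := by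
    intro z hz
    have h1 : ‖∫ t in (0:ℝ)..z, Q t‖ ≤ M * z * |z - 0| := by
      apply intervalIntegral.norm_integral_le_of_norm_le_const
      intro x hx
      rw [uIoc_of_le hz.1] at hx
      calc ‖Q x‖ ≤ M * x := by
            simpa [Real.norm_eq_abs] using hQbound x ⟨hx.1.le, hx.2.trans hz.2⟩
        _ ≤ M * z := by nlinarith [hx.1.le, hx.2]
    calc |G z| ≤ M * z * |z - 0| := h1
      _ = M * z ^ 2 := by
          rw [abs_of_nonneg (by linarith [hz.1] : (0:ℝ) ≤ z - 0)]; ring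
  -- the auxiliary integrand
  set f : ℝ → ℝ := fun z => Q z / z - G z / z ^ 2 with hfdef
  -- continuity of G on [0,u]
  have hGc : ContinuousOn G (Icc 0 u) := by
    have := intervalIntegral.continuousOn_primitive_interval
      (a := (0:ℝ)) (b := u) (μ := volume) (f := Q) (by rwa [uIcc_of_le hu0.le])
    rwa [uIcc_of_le hu0.le] at this
  -- continuity of f on (0,u]
  have hfc : ContinuousOn f (Ioc 0 u) := by
    have hsub : Ioc (0:ℝ) u ⊆ Icc 0 u := Ioc_subset_Icc_self
    apply ContinuousOn.sub
    · exact (hQc.mono (hsub.trans hIcc)).div continuousOn_id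
        (fun z hz => ne_of_gt hz.1)
    · exact (hGc.mono hsub).div (continuousOn_pow 2) (fun z hz => pow_ne_zero 2 (ne_of_gt hz.1))
  -- f is bounded on (0,u], hence integrable
  have hfbound : ∀ z ∈ Ioc (0:ℝ) u, ‖f z‖ ≤ 2 * M := by
    intro z hz
    have hz0 : 0 < z := hz.1
    have h1 : |Q z / z| ≤ M := by
      rw [abs_div, abs_of_pos hz0, div_le_iff₀ hz0]
      exact hQbound z ⟨hz0.le, hz.2⟩
    have h2 : |G z / z ^ 2| ≤ M := by
      rw [abs_div, abs_of_pos (by positivity : (0:ℝ) < z ^ 2),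
        div_le_iff₀ (by positivity : (0:ℝ) < z ^ 2)]
      exact hGbound z ⟨hz0.le, hz.2⟩
    calc ‖f z‖ = |Q z / z - G z / z ^ 2| := rfl
      _ ≤ |Q z / z| + |G z / z ^ 2| := abs_sub _ _
      _ ≤ 2 * M := by linarith
  have hfint : IntegrableOn f (Ioc 0 u) := by
    refine ⟨hfc.aestronglyMeasurable measurableSet_Ioc, ?_⟩
    exact HasFiniteIntegral.restrict_of_bounded (C := 2 * M) measure_Ioc_lt_top
      (ae_restrict_of_forall_mem measurableSet_Ioc hfbound)
  have hfii : ∀ a ∈ Icc (0:ℝ) u, IntervalIntegrable f volume a u := by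
    intro a ha
    rw [intervalIntegrable_iff_integrableOn_Ioc_of_le ha.2]
    exact hfint.mono_set (Ioc_subset_Ioc_left ha.1)
  have hfii0 : ∀ a ∈ Icc (0:ℝ) u, IntervalIntegrable f volume 0 a := by
    intro a ha
    rw [intervalIntegrable_iff_integrableOn_Ioc_of_le ha.1]
    exact hfint.mono_set (Ioc_subset_Ioc_right ha.2)
  -- H = G z / z has derivative f on (0,u]
  have hH : ∀ z ∈ Ioc (0:ℝ) u, HasDerivAt (fun x => G x / x) (f z) z := by
    intro z hz
    have hz0 : 0 < z := hz.1
    have hz1 : z < 1 := lt_of_le_of_lt hz.2 hu1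
    have hGd : HasDerivAt G (Q z) z := by
      apply intervalIntegral.integral_hasDerivAt_right (hQii z ⟨hz0.le, hz.2⟩)
      · exact (ContinuousOn.stronglyMeasurableAtFilter isOpen_Ioo
          (hQc.mono Ioo_subset_Ico_self)) z ⟨hz0, hz1⟩
      · exact hQc.continuousAt (Ico_mem_nhds hz0 hz1)
    have := hGd.div (hasDerivAt_id z) (ne_of_gt hz0)
    convert this using 1
    show Q z / z - G z / z ^ 2 = _
    field_simp
    ring
    simp only [id_eq]
    field_simp
    all_goals rfl
  -- FTC on [a,u] for 0 < a < u
  have key : ∀ a ∈ Ioo (0:ℝ) u, ∫ z in a..u, f z = G u / u - G a / a := by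
    intro a ha
    apply intervalIntegral.integral_eq_sub_of_hasDerivAt
    · intro z hz
      rw [uIcc_of_le ha.2.le] at hz
      exact hH z ⟨lt_of_lt_of_le ha.1 hz.1, hz.2⟩
    · exact hfii a ⟨ha.1.le, ha.2.le⟩
  -- the limiting filter
  have hne : (𝓝[Ioo (0:ℝ) u] (0:ℝ)).NeBot := by
    rw [← mem_closure_iff_nhdsWithin_neBot, closure_Ioo hu0.ne]
    exact ⟨le_rfl, hu0.le⟩
  set l : Filter ℝ := 𝓝[Ioo (0:ℝ) u] (0:ℝ) with hldef
  haveI : l.NeBot := hne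
  have hmem : ∀ᶠ a in l, a ∈ Ioo (0:ℝ) u := eventually_mem_nhdsWithin
  have htendM : Tendsto (fun a : ℝ => 2 * M * |a|) l (𝓝 0) := by
    have : Tendsto (fun a : ℝ => 2 * M * |a|) (𝓝 0) (𝓝 (2 * M * |0|)) :=
      (continuous_const.mul continuous_abs).tendsto 0
    simpa using this.mono_left nhdsWithin_le_nhds
  have t1 : Tendsto (fun a => ∫ z in (0:ℝ)..a, f z) l (𝓝 0) := by
    apply squeeze_zero_norm'
    · filter_upwards [hmem] with a ha
      have := intervalIntegral.norm_integral_le_of_norm_le_const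
        (C := 2 * M) (f := f) (a := (0:ℝ)) (b := a) ?_
      · calc ‖∫ z in (0:ℝ)..a, f z‖ ≤ 2 * M * |a - 0| := this
          _ = 2 * M * |a| := by rw [sub_zero]
      · intro x hx
        rw [uIoc_of_le ha.1.le] at hx
        exact hfbound x ⟨hx.1, hx.2.trans ha.2.le⟩
    · exact htendM
  have t2 : Tendsto (fun a => G a / a) l (𝓝 0) := by
    apply squeeze_zero_norm'
    · filter_upwards [hmem] with a ha
      have ha0 : 0 < a := ha.1
      calc ‖G a / a‖ = |G a| / a := by rw [norm_div, Real.norm_eq_abs, Real.norm_eq_abs, abs_of_pos ha0]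
        _ ≤ M * a ^ 2 / a := by
            gcongr
            exact hGbound a ⟨ha0.le, ha.2.le⟩
        _ = M * a := by field_simp
        _ ≤ 2 * M * |a| := by rw [abs_of_pos ha0]; nlinarith
    · exact htendM
  have hlim : Tendsto (fun a => (∫ z in (0:ℝ)..a, f z) + (G u / u - G a / a)) l
      (𝓝 (G u / u)) := by
    have hc : Tendsto (fun _ : ℝ => G u / u) l (𝓝 (G u / u)) := tendsto_const_nhds
    have := t1.add (hc.sub t2)
    simpa using this
  have heq : ∀ᶠ a in l,
      (∫ z in (0:ℝ)..a, f z) + (G u / u - G a / a) = ∫ z in (0:ℝ)..u, f z := by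
    filter_upwards [hmem] with a ha
    rw [← key a ha]
    exact intervalIntegral.integral_add_adjacent_intervals
      (hfii0 a ⟨ha.1.le, ha.2.le⟩) (hfii a ⟨ha.1.le, ha.2.le⟩)
  have hfin : (∫ z in (0:ℝ)..u, f z) = G u / u :=
    (tendsto_nhds_unique (hlim.congr' heq) tendsto_const_nhds).symm
  -- rewrite η z / z as f z inside the integral
  have hηf : (∫ z in (0:ℝ)..u, η z / z) = ∫ z in (0:ℝ)..u, f z := by
    apply intervalIntegral.integral_congr_ae
    apply ae_of_all
    intro z hz
    rw [uIoc_of_le hu0.le] at hz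
    have hz0 : 0 < z := hz.1
    have hz1 : z < 1 := lt_of_le_of_lt hz.2 hu1
    rw [hη z ⟨hz0, hz1⟩]
    show _ = Q z / z - G z / z ^ 2
    have : (∫ t in (0:ℝ)..z, Q t) = G z := rfl
    rw [this]
    field_simp
  rw [hη u ⟨hu0, hu1⟩, hηf, hfin]
  have hGu : (∫ z in (0:ℝ)..u, Q z) = G u := rfl
  rw [hGu]
  have hu' : u ≠ 0 := hu0.ne'
  field_simp
  ring
end

section
/- Let Q_X : ℝ → ℝ and φ : ℝ → ℝ each be continuously differentiable on [0,1) with Q_X(0) = 0, φ(0) = 0, and Q_X'(z) > 0 and φ'(z) > 0 for all z ∈ (0,1). Define η₁(u) = Q_X(u) − (1/u)·∫_0^u Q_X(z) dz and η₂(P) = φ(P) − (1/P)·∫_0^P φ(z) dz for u, P ∈ (0,1). Then for all u, P ∈ (0,1): Q_X(u) = η₁(u) + ∫_0^u η₁(z)/z dz and φ(P) = η₂(P) + ∫_0^P η₂(z)/z dz. That is, the quantile-curve based bivariate reversed mean residual life (η₁, η₂) determines the quantile curve (Q_X(u), φ(P)) uniquely. -/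
open MeasureTheory Set

lemma aux_recover (f f' η : ℝ → ℝ)
    (hd : ∀ z ∈ Ico (0:ℝ) 1, HasDerivWithinAt f (f' z) (Ico 0 1) z)
    (hc : ContinuousOn f' (Ico 0 1))
    (h0 : f 0 = 0)
    (hη : ∀ u ∈ Ioo (0:ℝ) 1, η u = f u - (1 / u) * ∫ z in (0:ℝ)..u, f z)
    (u : ℝ) (hu : u ∈ Ioo (0:ℝ) 1) :
    f u = η u + ∫ z in (0:ℝ)..u, η z / z := by
  obtain ⟨hu0, hu1⟩ := hu
  have hsub : Icc (0:ℝ) u ⊆ Ico 0 1 := fun x hx => ⟨hx.1, lt_of_le_of_lt hx.2 hu1⟩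
  have hfc : ContinuousOn f (Ico 0 1) := fun z hz => (hd z hz).continuousWithinAt
  -- bound on the derivative on [0,u]
  obtain ⟨C, hC⟩ := (isCompact_Icc (a := (0:ℝ)) (b := u)).exists_bound_of_continuousOn
    (hc.mono hsub)
  have hC0 : 0 ≤ C := le_trans (norm_nonneg _) (hC 0 ⟨le_refl 0, le_of_lt hu0⟩)
  -- f is C-Lipschitz on [0,u]
  have hlip : ∀ x ∈ Icc (0:ℝ) u, ∀ y ∈ Icc (0:ℝ) u, ‖f y - f x‖ ≤ C * ‖y - x‖ := by
    intro x hx y hy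
    exact (convex_Icc (0:ℝ) u).norm_image_sub_le_of_norm_hasDerivWithin_le
      (fun z hz => ((hd z (hsub hz)).mono hsub)) (fun z hz => hC z hz) hx hy
  have hfb : ∀ z ∈ Icc (0:ℝ) u, |f z| ≤ C * z := by
    intro z hz
    have := hlip 0 ⟨le_refl 0, le_of_lt hu0⟩ z hz
    simpa [h0, Real.norm_eq_abs, abs_of_nonneg hz.1] using this
  -- the primitive F and the averaged function g
  set F : ℝ → ℝ := fun z => ∫ t in (0:ℝ)..z, f t with hFdef
  set g : ℝ → ℝ := fun z => F z / z with hgdef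
  have hg0 : g 0 = 0 := by simp [hgdef, hFdef]
  have hFb : ∀ z ∈ Icc (0:ℝ) u, |F z| ≤ C * z * z := by
    intro z hz
    have : ‖∫ t in (0:ℝ)..z, f t‖ ≤ C * z * |z - 0| := by
      apply intervalIntegral.norm_integral_le_of_norm_le_const
      intro x hx
      rw [uIoc_of_le hz.1] at hx
      have hx' : x ∈ Icc (0:ℝ) u := ⟨le_of_lt hx.1, le_trans hx.2 hz.2⟩
      calc ‖f x‖ ≤ C * x := hfb x hx'
        _ ≤ C * z := by nlinarith [hx.2, hC0]
    simpa [abs_of_nonneg hz.1] using this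
  have hgb : ∀ z ∈ Icc (0:ℝ) u, |g z| ≤ C * z := by
    intro z hz
    rcases eq_or_lt_of_le hz.1 with h | h
    · simp [← h, hg0, hC0]
    · have := hFb z hz
      rw [hgdef]
      simp only [abs_div, abs_of_pos h]
      rw [div_le_iff₀ h]
      linarith [hFb z hz]
  -- integrability of f on subintervals
  have hfint : ∀ z ∈ Icc (0:ℝ) u, IntervalIntegrable f volume 0 z := by
    intro z hz
    apply ContinuousOn.intervalIntegrable
    apply hfc.mono
    rw [uIcc_of_le hz.1]
    exact fun x hx => hsub ⟨hx.1, le_trans hx.2 hz.2⟩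
  -- continuity of F on [0,u]
  have hFcont : ContinuousOn F (Icc 0 u) := by
    have := intervalIntegral.continuousOn_primitive_interval
      (f := f) (a := (0:ℝ)) (b := u) (μ := volume) ?_
    · rwa [uIcc_of_le (le_of_lt hu0)] at this
    · rw [uIcc_of_le (le_of_lt hu0)]
      exact (hfc.mono hsub).integrableOn_compact isCompact_Icc
  -- continuity of g on [0,u]
  have hgcont : ContinuousOn g (Icc 0 u) := by
    intro z hz
    rcases eq_or_lt_of_le hz.1 with h | h
    · -- continuity at 0 by squeeze
      rw [ContinuousWithinAt, ← h, hg0]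
      have hb : ∀ᶠ x in nhdsWithin 0 (Icc 0 u), ‖g x‖ ≤ C * x := by
        filter_upwards [self_mem_nhdsWithin] with x hx
        simpa [Real.norm_eq_abs] using hgb x hx
      have ht : Filter.Tendsto (fun z : ℝ => C * z) (nhdsWithin 0 (Icc 0 u)) (nhds 0) := by
        have : Filter.Tendsto (fun z : ℝ => C * z) (nhds 0) (nhds (C * 0)) :=
          (continuous_const.mul continuous_id).tendsto 0
        simpa using this.mono_left nhdsWithin_le_nhds
      exact squeeze_zero_norm' hb ht
    · exact (hFcont z hz).div continuousWithinAt_id (ne_of_gt h)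
  -- derivative of g on (0,u)
  have hgderiv : ∀ x ∈ Ioo (0:ℝ) u, HasDerivWithinAt g ((f x - (1/x) * F x) / x) (Ioi x) x := by
    intro x hx
    have hxIco : x ∈ Ico (0:ℝ) 1 := ⟨le_of_lt hx.1, lt_trans hx.2 hu1⟩
    have hmem : Ioo (0:ℝ) 1 ∈ nhds x := (isOpen_Ioo).mem_nhds ⟨hx.1, lt_trans hx.2 hu1⟩
    have hcontAt : ContinuousAt f x :=
      (hfc.mono Ioo_subset_Ico_self).continuousAt hmem
    have hmeas : StronglyMeasurableAtFilter f (nhds x) volume :=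
      ⟨Ioo 0 1, hmem, ((hfc.mono Ioo_subset_Ico_self).aestronglyMeasurable measurableSet_Ioo)⟩
    have hFd : HasDerivAt F (f x) x :=
      intervalIntegral.integral_hasDerivAt_right
        (hfint x ⟨le_of_lt hx.1, le_of_lt hx.2⟩) hmeas hcontAt
    have hid : HasDerivAt (fun z : ℝ => z) 1 x := hasDerivAt_id x
    have hx0 : x ≠ 0 := ne_of_gt hx.1
    have := hFd.div hid hx0
    have heq : (f x * x - F x * 1) / x ^ 2 = (f x - (1/x) * F x) / x := by
      rw [mul_one, sq, ← div_div]
      congr 1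
      rw [div_eq_iff hx0]
      field_simp
    rw [heq] at this
    exact this.hasDerivWithinAt
  -- integrability of the integrand
  have hmeasg : AEStronglyMeasurable (fun z => (f z - (1/z) * F z) / z)
      (volume.restrict (Ioc 0 u)) := by
    have hcont : ContinuousOn (fun z => (f z - (1/z) * F z) / z) (Ioc 0 u) := by
      apply ContinuousOn.div
      · apply ContinuousOn.sub
        · exact (hfc.mono hsub).mono Ioc_subset_Icc_self
        · exact ContinuousOn.mul
            ((continuousOn_const.div continuousOn_id (fun x hx => ne_of_gt hx.1)))
            (hFcont.mono Ioc_subset_Icc_self)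
      · exact continuousOn_id
      · exact fun x hx => ne_of_gt hx.1
    exact hcont.aestronglyMeasurable measurableSet_Ioc
  have hbound : ∀ z ∈ Ioc (0:ℝ) u, |(f z - (1/z) * F z) / z| ≤ 2 * C := by
    intro z hz
    have hz' : z ∈ Icc (0:ℝ) u := Ioc_subset_Icc_self hz
    have h1 : |f z| ≤ C * z := hfb z hz'
    have h2 : |(1/z) * F z| ≤ C * z := by
      rw [abs_mul, abs_of_pos (one_div_pos.mpr hz.1), one_div, inv_mul_le_iff₀ hz.1]
      nlinarith [hFb z hz']
    rw [abs_div, abs_of_pos hz.1, div_le_iff₀ hz.1]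
    calc |f z - (1/z) * F z| ≤ |f z| + |(1/z) * F z| := abs_sub _ _
      _ ≤ C * z + C * z := add_le_add h1 h2
      _ = 2 * C * z := by ring
  have hint : IntervalIntegrable (fun z => (f z - (1/z) * F z) / z) volume 0 u := by
    rw [intervalIntegrable_iff_integrableOn_Ioc_of_le (le_of_lt hu0)]
    apply Integrable.mono' (integrable_const (2 * C)) hmeasg
    · filter_upwards [ae_restrict_mem measurableSet_Ioc] with z hz
      rw [Real.norm_eq_abs]
      exact hbound z hz
  -- FTC
  have hFTC : (∫ z in (0:ℝ)..u, (f z - (1/z) * F z) / z) = g u - g 0 :=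
    intervalIntegral.integral_eq_sub_of_hasDeriv_right_of_le (le_of_lt hu0)
      hgcont hgderiv hint
  -- rewrite η z / z as the canonical integrand on Ι 0 u
  have hcongr : (∫ z in (0:ℝ)..u, η z / z) = ∫ z in (0:ℝ)..u, (f z - (1/z) * F z) / z := by
    apply intervalIntegral.integral_congr_ae
    apply Filter.Eventually.of_forall
    intro x hx
    rw [uIoc_of_le (le_of_lt hu0)] at hx
    have hx' : x ∈ Ioo (0:ℝ) 1 := ⟨hx.1, lt_of_le_of_lt hx.2 hu1⟩
    rw [hη x hx']
  rw [hcongr, hFTC, hg0, sub_zero, hη u ⟨hu0, hu1⟩, hgdef]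
  simp only
  field_simp
  simp only [hFdef]
  ring

/-- The quantile-curve based bivariate reversed mean residual life `(η₁, η₂)` in the
direction `ε₋₋` determines the quantile curve `(Q_X(u), φ(P))` uniquely:
`Q_X(u) = η₁(u) + ∫_0^u η₁(z)/z dz` and `φ(P) = η₂(P) + ∫_0^P η₂(z)/z dz`. -/
theorem bivariate_reversed_mrl_determines_quantile_curve
    (QX φ Q' φ' η₁ η₂ : ℝ → ℝ)
    (hQXd : ∀ z ∈ Ico (0:ℝ) 1, HasDerivWithinAt QX (Q' z) (Ico 0 1) z)
    (hφd : ∀ z ∈ Ico (0:ℝ) 1, HasDerivWithinAt φ (φ' z) (Ico 0 1) z)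
    (hQ'c : ContinuousOn Q' (Ico 0 1))
    (hφ'c : ContinuousOn φ' (Ico 0 1))
    (hQX0 : QX 0 = 0)
    (hφ0 : φ 0 = 0)
    (hQ'pos : ∀ z ∈ Ioo (0:ℝ) 1, 0 < Q' z)
    (hφ'pos : ∀ z ∈ Ioo (0:ℝ) 1, 0 < φ' z)
    (hη₁ : ∀ u ∈ Ioo (0:ℝ) 1, η₁ u = QX u - (1 / u) * ∫ z in (0:ℝ)..u, QX z)
    (hη₂ : ∀ P ∈ Ioo (0:ℝ) 1, η₂ P = φ P - (1 / P) * ∫ z in (0:ℝ)..P, φ z) :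
    ∀ u ∈ Ioo (0:ℝ) 1, ∀ P ∈ Ioo (0:ℝ) 1,
      QX u = η₁ u + (∫ z in (0:ℝ)..u, η₁ z / z) ∧
      φ P = η₂ P + ∫ z in (0:ℝ)..P, η₂ z / z := by
  intro u hu P hP
  exact ⟨aux_recover QX Q' η₁ hQXd hQ'c hQX0 hη₁ u hu,
    aux_recover φ φ' η₂ hφd hφ'c hφ0 hη₂ P hP⟩
end
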